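/- arXiv:1306.4235 — 4 statements merged into one kernel-verified Lean document; each statement's English description precedes it below -/
import Mathlib

section
/- Let U : Grp ⥤ Type be the forgetful functor and for each natural number n let U^n : Grp ⥤ Type be the functor sending a group G to the type Fin n → U(G) and a group homomorphism f to postcomposition with U(f). For all natural numbers n and m, the map sending a tuple of words w : Fin m → FreeGroup (Fin n) to the natural transformation U^n ⟶ U^m whose component at a group G sends g : Fin n → G to the tuple j ↦ FreeGroup.lift g (w j) is a bijection between (Fin m → FreeGroup (Fin n)) and the natural transformations U^n ⟶ U^m. -/
open CategoryTheory

/-- The `n`-th power of the forgetful functor on the category of groups, sending a group `G`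
to `Fin n → G` and a homomorphism to postcomposition with it. -/
def forgetPow (n : ℕ) : GrpCat.{u} ⥤ Type u where
  obj G := Fin n → G
  map f := TypeCat.ofHom (fun x => fun i => f (x i))

/-!
`Uⁿ` is represented by the free group on `n` generators (lifted to the universe `u`), with
universal element the tuple of generators. Hence, by naturality, a transformation `η : Uⁿ ⟶ Uᵐ`
is determined by the `m` words `η(generators)`, and evaluating at a tuple `g` substitutes `g`
for the generators in those words.
-/

namespace FreeGroup

theorem lift_map_apply {α β G : Type*} [Group G] (f : α → β) (g : β → G) (x : FreeGroup α) :
    lift g (map f x) = lift (g ∘ f) x :=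
  lift_unique ((lift g).comp (map f)) fun a => by simp

end FreeGroup

namespace forgetPow

variable {n m : ℕ}

abbrev freeObj (n : ℕ) : GrpCat.{u} := GrpCat.of (FreeGroup (ULift.{u} (Fin n)))

def generators (n : ℕ) : Fin n → FreeGroup (ULift.{u} (Fin n)) := fun i => FreeGroup.of ⟨i⟩

theorem lift_generators : FreeGroup.lift (generators.{u} n) = FreeGroup.map ULift.up :=
  FreeGroup.map_eq_lift.symm

theorem natTrans_app_eq_lift (η : forgetPow.{u} n ⟶ forgetPow.{u} m) (G : GrpCat.{u})
    (g : Fin n → G) (j : Fin m) :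
    η.app G g j = FreeGroup.lift (g ∘ ULift.down) (η.app (freeObj n) (generators n) j) := by
  let f : freeObj n ⟶ G := GrpCat.ofHom (FreeGroup.lift (g ∘ ULift.down))
  have map_generators : (forgetPow n).map f (generators n) = g := by
    funext i
    exact FreeGroup.lift_apply_of
  calc η.app G g j = η.app G ((forgetPow n).map f (generators n)) j := by rw [map_generators]
    _ = (forgetPow m).map f (η.app (freeObj n) (generators n)) j :=
      congrFun (NatTrans.naturality_apply η f (generators n)) j
    _ = _ := rfl

def ofWords (w : Fin m → FreeGroup (Fin n)) : forgetPow.{u} n ⟶ forgetPow.{u} m where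
  app G := TypeCat.ofHom (fun g j => FreeGroup.lift g (w j))
  naturality := by
    intro G H f
    ext g
    funext j
    exact (FreeGroup.lift_unique (f.hom.comp (FreeGroup.lift g))
      (fun x => congrArg f.hom (FreeGroup.lift_apply_of (f := g)))).symm

theorem ofWords_injective : Function.Injective (ofWords.{u} (n := n) (m := m)) := by
  intro w w' h
  have h_words : (fun j => FreeGroup.lift (generators n) (w j)) =
      fun j => FreeGroup.lift (generators n) (w' j) :=
    congrArg (fun η => η.app (freeObj n) (generators n)) h
  rw [lift_generators] at h_words
  exact funext fun j => FreeGroup.map_injective ULift.up_injective (congrFun h_words j)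

theorem ofWords_surjective : Function.Surjective (ofWords.{u} (n := n) (m := m)) := by
  intro η
  refine ⟨fun j => FreeGroup.map ULift.down (η.app (freeObj n) (generators n) j), ?_⟩
  ext G g
  funext j
  exact (FreeGroup.lift_map_apply _ _ _).trans (natTrans_app_eq_lift η G g j).symm

end forgetPow

/-- Reconstruction of the hom-sets `T_U(n, m) = Nat(Uⁿ, Uᵐ)` of the Lawvere theory of groups
from the forgetful functor `U` on the category of groups: natural transformations
`Uⁿ ⟶ Uᵐ` correspond exactly to `m`-tuples of words in the free group on `n` generators. -/
theorem groupOperations_bijective (n m : ℕ) :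
    Function.Bijective (fun w : Fin m → FreeGroup (Fin n) =>
      ({ app := fun G => TypeCat.ofHom (fun g j => FreeGroup.lift g (w j))
         naturality := by
           intro G H f
           ext g
           funext j
           exact (FreeGroup.lift_unique (f.hom.comp (FreeGroup.lift g))
             (fun x => congrArg f.hom (FreeGroup.lift_apply_of (f := g)))).symm } :
        forgetPow.{u} n ⟶ forgetPow.{u} m)) :=
  ⟨forgetPow.ofWords_injective, forgetPow.ofWords_surjective⟩
end

section
/- Let R be a ring and U : ModuleCat R ⥤ Type the forgetful functor on the category of (left) R-modules. The map sending r : R to the natural endomorphism of U whose component at an R-module M is x ↦ r • x is a bijection between R and the natural transformations U ⟶ U. -/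
open CategoryTheory

/-!
A natural endomorphism `η` of the forgetful functor is determined by the single element
`η.app R 1`: naturality along the linear map `R → M, s ↦ s • x` gives `η.app M x = η.app R 1 • x`.
Hence `η ↦ η.app R 1` is inverse to `r ↦ (r • ·)`.
-/

namespace ModuleCat

variable {R : Type u} [Ring R]

def forgetSMul (r : R) : forget (ModuleCat.{u} R) ⟶ forget (ModuleCat.{u} R) where
  app M := TypeCat.ofHom fun x : M => r • x
  naturality M N f := by
    ext x
    exact (map_smul f.hom r x).symm

theorem forgetSMul_app_one (r : R) : (forgetSMul r).app (of R R) (1 : R) = r :=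
  mul_one r

theorem forget_endo_app_eq_smul (η : forget (ModuleCat.{u} R) ⟶ forget (ModuleCat.{u} R))
    (M : ModuleCat.{u} R) (x : M) : η.app M x = η.app (of R R) (1 : R) • x := by
  have h := types_congr_hom (η.naturality (ofHom (LinearMap.toSpanSingleton R M x))) (1 : R)
  calc η.app M x = η.app M (LinearMap.toSpanSingleton R M x 1) := by
        rw [LinearMap.toSpanSingleton_apply, one_smul]
    _ = LinearMap.toSpanSingleton R M x (η.app (of R R) 1) := h
    _ = η.app (of R R) 1 • x := rfl

theorem forgetSMul_bijective : Function.Bijective (forgetSMul (R := R)) := by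
  refine Function.bijective_iff_has_inverse.mpr
    ⟨fun η => η.app (of R R) (1 : R), forgetSMul_app_one, fun η => ?_⟩
  ext M x
  exact (forget_endo_app_eq_smul η M x).symm

end ModuleCat

/-- Reconstruction of a ring from its category of modules, at the level of unary operations:
the natural endomorphisms of the forgetful functor `U : ModuleCat R ⥤ Type` correspond
exactly to the elements of `R`, via `r ↦ (x ↦ r • x)`. -/
theorem moduleForget_end_bijective (R : Type u) [Ring R] :
    Function.Bijective (fun r : R =>
      ({ app := fun M => TypeCat.ofHom (fun (x : M) => r • x)
         naturality := by
           intro M N f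
           ext x
           exact (map_smul f.hom r x).symm } :
        forget (ModuleCat.{u} R) ⟶ forget (ModuleCat.{u} R))) :=
  ModuleCat.forgetSMul_bijective
end

section
/- Let R be a commutative ring. The map from R to the endomorphisms of the identity functor 𝟭 (ModuleCat R), sending r to the natural transformation whose component at an R-module M is the R-linear map x ↦ r • x, is bijective, sends 1 to the identity natural transformation, sends products in R to (vertical) compositions of natural transformations, and sends sums in R to sums of natural transformations; i.e. it is a ring isomorphism from R onto the endomorphism ring of the identity functor of ModuleCat R. -/
open CategoryTheory

def smulNat (R : Type u) [CommRing R] (r : R) : End (𝟭 (ModuleCat.{u} R)) where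
  app M := ModuleCat.ofHom (LinearMap.lsmul R M r)
  naturality := by
    intro M N f
    ext x
    exact (map_smul f.hom r x).symm

namespace ModuleCat

variable {R : Type u} [Ring R]

theorem endIdFunctor_ext {η θ : End (𝟭 (ModuleCat.{u} R))}
    (h : ∀ (M : ModuleCat.{u} R) (m : M), η.app M m = θ.app M m) : η = θ :=
  NatTrans.ext <| funext fun M => hom_ext <| LinearMap.ext (h M)

/-- Naturality along `r ↦ r • m : R → M`. -/
theorem endIdFunctor_app_apply (η : End (𝟭 (ModuleCat.{u} R))) (M : ModuleCat.{u} R) (m : M) :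
    η.app M m = (η.app (of R R) (1 : R) : R) • m := by
  have h := ConcreteCategory.congr_hom
    (η.naturality (Y := M) (ofHom (LinearMap.toSpanSingleton R M m))) (1 : R)
  simpa using h

end ModuleCat

section smulNat

variable {R : Type u} [CommRing R]

theorem smulNat_one : smulNat R 1 = 1 :=
  ModuleCat.endIdFunctor_ext fun _ => one_smul R

theorem smulNat_mul (r s : R) : smulNat R (r * s) = smulNat R r * smulNat R s :=
  ModuleCat.endIdFunctor_ext fun _ => mul_smul r s

theorem smulNat_add (r s : R) : smulNat R (r + s) = smulNat R r + smulNat R s :=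
  ModuleCat.endIdFunctor_ext fun _ => add_smul r s

theorem smulNat_injective : Function.Injective (smulNat R) := fun r s h => by
  have h₁ : r • (1 : R) = s • (1 : R) :=
    congr_arg (fun η : End (𝟭 (ModuleCat.{u} R)) => (η.app (.of R R) (1 : R) : R)) h
  simpa using h₁

theorem smulNat_surjective : Function.Surjective (smulNat R) := fun η =>
  ⟨(η.app (ModuleCat.of R R) (1 : R) : R),
    ModuleCat.endIdFunctor_ext fun M m => (ModuleCat.endIdFunctor_app_apply η M m).symm⟩

end smulNat

/-- Reconstruction of a commutative ring as the endomorphism ring of the identity functor of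
its category of modules (the center of the module category): the map `r ↦ (x ↦ r • x)` is
bijective, preserves `1`, products and sums, i.e. it is a ring isomorphism onto
`End (𝟭 (ModuleCat R))`. -/
theorem smulNat_ringIso (R : Type u) [CommRing R] :
    Function.Bijective (smulNat R) ∧
      smulNat R 1 = 1 ∧
      (∀ r s : R, smulNat R (r * s) = smulNat R r * smulNat R s) ∧
      (∀ r s : R, smulNat R (r + s) = smulNat R r + smulNat R s) :=
  ⟨⟨smulNat_injective, smulNat_surjective⟩, smulNat_one, smulNat_mul, smulNat_add⟩
end

section
/- Let k be a field and G a finite group. The group homomorphism from G to the group of monoidal natural automorphisms of the forgetful (fiber) functor FDRep k G ⥤ FGModuleCat k, sending g to the automorphism whose component at a finite-dimensional representation (V, ρ) is the linear automorphism ρ(g) of V, is bijective; that is, G is isomorphic to the group of monoidal natural automorphisms of the fiber functor on its category of finite-dimensional representations. -/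
open CategoryTheory MonoidalCategory

universe u

/-- The fiber functor of `FDRep k G`, i.e. the forgetful functor to finite-dimensional
vector spaces, bundled as a (lax) monoidal functor. -/
noncomputable def fiberFunctor (k G : Type u) [Field k] [Group G] :
    LaxMonoidalFunctor (FDRep k G) (FGModuleCat k) :=
  LaxMonoidalFunctor.of (Action.forget (FGModuleCat k) (MonCat.of G))

/-- The monoidal natural automorphism of the fiber functor induced by a group element `g`,
whose component at a representation `(V, ρ)` is the linear automorphism `ρ g` of `V`. -/
noncomputable def tannakaApp (k G : Type u) [Field k] [Group G] (g : G) :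
    Aut (fiberFunctor k G) :=
  LaxMonoidalFunctor.isoOfComponents
    (fun X =>
      { hom := FGModuleCat.ofHom (X.ρ g)
        inv := FGModuleCat.ofHom (X.ρ g⁻¹)
        hom_inv_id := by
          show FGModuleCat.ofHom (X.ρ g⁻¹ * X.ρ g) = _
          rw [← map_mul, inv_mul_cancel, map_one]
          rfl
        inv_hom_id := by
          show FGModuleCat.ofHom (X.ρ g * X.ρ g⁻¹) = _
          rw [← map_mul, mul_inv_cancel, map_one]
          rfl })
    (naturality := fun f => (f.comm g).symm)
    (unit := by simp [fiberFunctor]; exact (Action.tensorUnit_ρ (V := FGModuleCat k) (G := G) (g := g)))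
    (tensor := fun X Y => by simp [fiberFunctor]; exact (Action.tensor_ρ (X := X) (Y := Y) (g := g)))

/-- The group homomorphism from `G` to the group of monoidal natural automorphisms of
the fiber functor `FDRep k G ⥤ FGModuleCat k`, sending `g` to the automorphism whose
component at `(V, ρ)` is `ρ g`. -/
noncomputable def tannakaHom (k G : Type u) [Field k] [Group G] :
    G →* Aut (fiberFunctor k G) where
  toFun := tannakaApp k G
  map_one' := by
    apply Iso.ext
    apply LaxMonoidalFunctor.hom_ext
    apply NatTrans.ext
    funext X
    show FGModuleCat.ofHom (X.ρ 1) = _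
    rw [map_one]
    rfl
  map_mul' g h := by
    apply Iso.ext
    apply LaxMonoidalFunctor.hom_ext
    apply NatTrans.ext
    funext X
    show FGModuleCat.ofHom (X.ρ (g * h)) = _
    rw [map_mul]
    rfl

-- `fiberFunctor` and `tannakaHom` unfold to Mathlib's `TannakaDuality.FiniteGroup.forget` and
-- `TannakaDuality.FiniteGroup.equivHom`, whose bijectivity is packaged in `equiv`.
/-- **Tannaka duality for finite groups**: a finite group `G` is isomorphic to the group of
monoidal natural automorphisms of the fiber functor on its category of finite-dimensional
`k`-linear representations; the canonical homomorphism `g ↦ ((V, ρ) ↦ ρ g)` is bijective. -/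
theorem tannaka_duality (k G : Type u) [Field k] [Group G] [Finite G] :
    Function.Bijective (tannakaHom k G) :=
  (TannakaDuality.FiniteGroup.equiv k G).bijective
end
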